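/- arXiv:2101.08637 — 5 statements merged into one kernel-verified Lean document; each statement's English description precedes it below -/
import Mathlib

section
/- For every real number x ≥ 6, log x + log(x−1) − log 2 − x·log 1.58 ≤ 0, where log denotes the natural logarithm. (The derivative 1/x + 1/(x−1) − log 1.58 is negative for x ≥ 6, since 1/x + 1/(x−1) ≤ 0.4 < log 1.58 ≈ 0.4574, and the value at x = 6 is approximately −0.0365.) -/
/-- For every real `x ≥ 6`,
`log x + log (x-1) - log 2 - x · log 1.58 ≤ 0`. -/
theorem log_ineq_of_six_le (x : ℝ) (hx : 6 ≤ x) :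
    Real.log x + Real.log (x - 1) - Real.log 2 - x * Real.log 1.58 ≤ 0 := by
  have hx0 : (0:ℝ) < x := by linarith
  have hx1 : (0:ℝ) < x - 1 := by linarith
  -- tangent line bounds at 5.5
  have h1 : Real.log x ≤ Real.log 5.5 + (x / 5.5 - 1) := by
    have h := Real.log_le_sub_one_of_pos (show (0:ℝ) < x / 5.5 by positivity)
    rw [Real.log_div hx0.ne' (by norm_num)] at h
    linarith
  have h2 : Real.log (x - 1) ≤ Real.log 5.5 + ((x - 1) / 5.5 - 1) := by
    have h := Real.log_le_sub_one_of_pos (show (0:ℝ) < (x - 1) / 5.5 by positivity)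
    rw [Real.log_div hx1.ne' (by norm_num)] at h
    linarith
  -- lower bound on log 1.58
  have h3 : (4:ℝ)/11 ≤ Real.log 1.58 := by
    have he : Real.exp (4/11) ≤ 11/7 := by
      have h := Real.add_one_le_exp (-(4/11) : ℝ)
      rw [Real.exp_neg] at h
      have hpos : 0 < Real.exp (4/11 : ℝ) := Real.exp_pos _
      have hinv : Real.exp (4/11 : ℝ) * (Real.exp (4/11 : ℝ))⁻¹ = 1 :=
        mul_inv_cancel₀ hpos.ne'
      nlinarith
    rw [Real.le_log_iff_exp_le (by norm_num : (0:ℝ) < 1.58)]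
    linarith
  -- value check at x = 6 : 5.5^2 ≤ 2 * 1.58^6
  have h4 : 2 * Real.log 5.5 ≤ Real.log 2 + 6 * Real.log 1.58 := by
    have hlog : Real.log ((5.5:ℝ)^2) ≤ Real.log (2 * 1.58^6) := by
      apply Real.log_le_log (by positivity)
      norm_num
    rw [Real.log_pow, Real.log_mul (by norm_num) (by positivity), Real.log_pow] at hlog
    push_cast at hlog
    linarith
  have h5 : (x - 6) * (4/11) ≤ (x - 6) * Real.log 1.58 :=
    mul_le_mul_of_nonneg_left h3 (by linarith)
  have e1 : x / 5.5 = 2 * x / 11 := by ring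
  have e2 : (x - 1) / 5.5 = (2 * x - 2) / 11 := by ring
  have e3 : (x - 6) * (4/11) = (4 * x - 24) / 11 := by ring
  have e4 : (x - 6) * Real.log 1.58 = x * Real.log 1.58 - 6 * Real.log 1.58 := by ring
  rw [e1] at h1
  rw [e2] at h2
  rw [e3, e4] at h5
  linarith
end

section
/- For every natural number k ≥ 3, C(k,3)^{1/k} ≤ 35^{1/7}; that is, the maximal value of C(k,3)^{1/k} over all natural numbers k is attained at k = 7, where it equals 35^{1/7} ≈ 1.6619. -/
lemma step_ineq (k : ℕ) (hk : 7 ≤ k) : (k + 1) ^ 7 ≤ 35 * (k - 2) ^ 7 := by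
  have h1 : 5 * (k + 1) ≤ 8 * (k - 2) := by omega
  have h2 : (5 * (k + 1)) ^ 7 ≤ (8 * (k - 2)) ^ 7 := Nat.pow_le_pow_left h1 7
  have h3 : 5 ^ 7 * (k + 1) ^ 7 ≤ 8 ^ 7 * (k - 2) ^ 7 := by
    simpa [Nat.mul_pow] using h2
  have h4 : 8 ^ 7 * (k - 2) ^ 7 ≤ 5 ^ 7 * (35 * (k - 2) ^ 7) := by
    have : (8:ℕ) ^ 7 ≤ 5 ^ 7 * 35 := by norm_num
    calc 8 ^ 7 * (k - 2) ^ 7 ≤ 5 ^ 7 * 35 * (k - 2) ^ 7 :=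
          Nat.mul_le_mul_right _ this
      _ = 5 ^ 7 * (35 * (k - 2) ^ 7) := by ring
  exact Nat.le_of_mul_le_mul_left (h3.trans h4) (by norm_num)

lemma choose_pow_le (k : ℕ) (hk : 3 ≤ k) : (k.choose 3) ^ 7 ≤ 35 ^ k := by
  rcases le_or_gt k 7 with h | h
  · interval_cases k <;> decide
  · have h7 : 7 ≤ k := le_of_lt h
    clear hk h
    induction k, h7 using Nat.le_induction with
    | base => decide
    | succ k hk ih =>
      have key : k.choose 3 * (k + 1) = (k + 1).choose 3 * (k - 2) := by
        have h := Nat.choose_mul_succ_eq k 3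
        rwa [show k + 1 - 3 = k - 2 from by omega] at h
      have hpos : 0 < (k - 2) ^ 7 := Nat.pow_pos (by omega)
      have : ((k + 1).choose 3) ^ 7 * (k - 2) ^ 7 ≤ 35 ^ (k + 1) * (k - 2) ^ 7 := by
        calc ((k + 1).choose 3) ^ 7 * (k - 2) ^ 7
            = (k.choose 3) ^ 7 * (k + 1) ^ 7 := by
              rw [← Nat.mul_pow, ← Nat.mul_pow, key]
          _ ≤ 35 ^ k * (35 * (k - 2) ^ 7) :=
              Nat.mul_le_mul ih (step_ineq k hk)
          _ = 35 ^ (k + 1) * (k - 2) ^ 7 := by ring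
      exact Nat.le_of_mul_le_mul_right this hpos

/-- For every natural number `k ≥ 3`, `C(k,3)^(1/k) ≤ 35^(1/7)`. -/
theorem choose_three_root_le (k : ℕ) (hk : 3 ≤ k) :
    ((k.choose 3 : ℝ)) ^ ((1 : ℝ) / k) ≤ (35 : ℝ) ^ ((1 : ℝ) / 7) := by
  have hk0 : (0:ℝ) < k := by positivity
  have hkne : (k:ℝ) ≠ 0 := ne_of_gt hk0
  have e1 : ((k.choose 3 : ℝ)) ^ ((1 : ℝ) / k)
      = ((((k.choose 3) ^ 7 : ℕ) : ℝ)) ^ ((1 : ℝ) / (7 * k)) := by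
    rw [Nat.cast_pow, ← Real.rpow_natCast ((k.choose 3 : ℝ)) 7,
      ← Real.rpow_mul (by positivity)]
    congr 1
    field_simp
    norm_num
  have e2 : (35 : ℝ) ^ ((1 : ℝ) / 7)
      = (((35 ^ k : ℕ) : ℝ)) ^ ((1 : ℝ) / (7 * k)) := by
    rw [Nat.cast_pow, ← Real.rpow_natCast ((35:ℕ) : ℝ) k,
      ← Real.rpow_mul (by norm_num)]
    push_cast
    congr 1
    field_simp
  rw [e1, e2]
  exact Real.rpow_le_rpow (by positivity)
    (by exact_mod_cast choose_pow_le k hk) (by positivity)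
end

section
/- For every natural number k ≥ 4, C(k,4)^{1/k} ≤ 126^{1/9}; that is, the maximal value of C(k,4)^{1/k} over all natural numbers k is attained at k = 9, where it equals 126^{1/9} ≈ 1.7115. -/
lemma nat_key : ∀ n : ℕ, ((n + 9).choose 4) ^ 9 ≤ 126 ^ (n + 9) := by
  intro n
  induction n with
  | zero => norm_num [show Nat.choose 9 4 = 126 from by decide]
  | succ n ih =>
    have hid : (n + 9).choose 4 * (n + 10) = (n + 10).choose 4 * (n + 6) := by
      have := Nat.choose_mul_succ_eq (n + 9) 4
      simpa using this
    have h1 : ((n + 10).choose 4) ^ 9 * (n + 6) ^ 9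
        = ((n + 9).choose 4) ^ 9 * (n + 10) ^ 9 := by
      rw [← mul_pow, ← mul_pow, hid]
    have ha : 6 * (n + 10) ≤ 10 * (n + 6) := by omega
    have hb : (6 * (n + 10)) ^ 9 ≤ (10 * (n + 6)) ^ 9 := Nat.pow_le_pow_left ha 9
    rw [mul_pow, mul_pow] at hb
    have h2 : (n + 10) ^ 9 ≤ 126 * (n + 6) ^ 9 := by
      have hc : 10 ^ 9 * (n + 6) ^ 9 ≤ 6 ^ 9 * (126 * (n + 6) ^ 9) := by
        rw [← mul_assoc]
        exact Nat.mul_le_mul_right _ (by norm_num)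
      exact Nat.le_of_mul_le_mul_left (le_trans hb hc) (by norm_num)
    have h3 : ((n + 10).choose 4) ^ 9 * (n + 6) ^ 9
        ≤ 126 ^ (n + 10) * (n + 6) ^ 9 := by
      calc ((n + 10).choose 4) ^ 9 * (n + 6) ^ 9
          = ((n + 9).choose 4) ^ 9 * (n + 10) ^ 9 := h1
        _ ≤ 126 ^ (n + 9) * (126 * (n + 6) ^ 9) :=
            Nat.mul_le_mul ih h2
        _ = 126 ^ (n + 10) * (n + 6) ^ 9 := by ring
    have h4 := Nat.le_of_mul_le_mul_right h3 (by positivity : 0 < (n + 6) ^ 9)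
    have hnn : n + 1 + 9 = n + 10 := by omega
    rw [hnn]; exact h4

lemma nat_all (k : ℕ) (hk : 4 ≤ k) : (k.choose 4) ^ 9 ≤ 126 ^ k := by
  rcases le_or_gt 9 k with h | h
  · obtain ⟨n, rfl⟩ := Nat.exists_eq_add_of_le h
    simpa [Nat.add_comm] using nat_key n
  · interval_cases k <;> norm_num [Nat.choose]

/-- For every natural number `k ≥ 4`, `C(k,4)^(1/k) ≤ 126^(1/9)`. -/
theorem choose_four_root_le (k : ℕ) (hk : 4 ≤ k) :
    ((k.choose 4 : ℝ)) ^ ((1 : ℝ) / k) ≤ (126 : ℝ) ^ ((1 : ℝ) / 9) := by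
  have hk0 : (0 : ℝ) < k := by exact_mod_cast Nat.lt_of_lt_of_le (by norm_num) hk
  have hC : ((k.choose 4 : ℝ)) ^ (9 : ℕ) ≤ (126 : ℝ) ^ k := by
    exact_mod_cast nat_all k hk
  have h1 : ((k.choose 4 : ℝ)) ^ ((1 : ℝ) / k)
      = (((k.choose 4 : ℝ)) ^ (9 : ℕ)) ^ ((1 : ℝ) / (9 * k)) := by
    rw [← Real.rpow_natCast _ 9, ← Real.rpow_mul (by positivity)]
    congr 1
    field_simp
    norm_num
  have h2 : (126 : ℝ) ^ ((1 : ℝ) / 9)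
      = (((126 : ℝ)) ^ k) ^ ((1 : ℝ) / (9 * k)) := by
    rw [← Real.rpow_natCast 126 k, ← Real.rpow_mul (by norm_num)]
    congr 1
    field_simp
  rw [h1, h2]
  exact Real.rpow_le_rpow (by positivity) hC (by positivity)
end

section
/- For all natural numbers a, b and c with ℓ = a + b + c, we have c + a·b + C(a,3) ≤ max{C(ℓ,1), C(ℓ,2), C(ℓ,3)}; that is, F(ℓ,3) ≤ G(ℓ,3). -/
lemma choose3_add (a s : ℕ) : a.choose 3 + a.choose 2 * s ≤ (a + s).choose 3 := by
  induction s with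
  | zero => simp
  | succ n ih =>
    have h2 : a.choose 2 ≤ (a + n).choose 2 := Nat.choose_le_choose 2 (by omega)
    have hs : (a + (n+1)).choose 3 = (a + n).choose 2 + (a + n).choose 3 :=
      Nat.choose_succ_succ (a + n) 2
    have hm : a.choose 2 * (n+1) = a.choose 2 * n + a.choose 2 := by ring
    omega

/-- `F(ℓ,3) ≤ G(ℓ,3)`: for `ℓ = a + b + c`,
`c + a·b + C(a,3) ≤ max {C(ℓ,1), C(ℓ,2), C(ℓ,3)}`. -/
theorem multi_occurrence_le_single_three (a b c ℓ : ℕ) (h : ℓ = a + b + c) :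
    c + a * b + a.choose 3 ≤ max (ℓ.choose 1) (max (ℓ.choose 2) (ℓ.choose 3)) := by
  subst h
  match a with
  | 0 =>
    refine le_trans ?_ (le_max_left _ _)
    simp [Nat.choose_one_right]
  | 1 =>
    refine le_trans ?_ (le_max_left _ _)
    have h13 : Nat.choose 1 3 = 0 := by decide
    simp [Nat.choose_one_right]
    omega
  | 2 =>
    refine le_trans ?_ (le_trans (le_max_left _ _) (le_max_right _ _))
    have key : ∀ s : ℕ, 2 * s ≤ (s + 2).choose 2 := by
      intro s
      have h1 : (s + 2).choose 2 = (s + 1).choose 1 + (s + 1).choose 2 :=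
        Nat.choose_succ_succ (s + 1) 1
      have h2 : (s + 1).choose 2 = s.choose 1 + s.choose 2 :=
        Nat.choose_succ_succ s 1
      have h3 : (s + 1).choose 1 = s + 1 := Nat.choose_one_right _
      have h4 : s.choose 1 = s := Nat.choose_one_right _
      omega
    have h1 := key (b + c)
    have h2 : (2 : ℕ) + b + c = (b + c) + 2 := by ring
    rw [h2]
    have h23 : Nat.choose 2 3 = 0 := by decide
    omega
  | (n+3) =>
    set a := n + 3 with ha
    refine le_trans ?_ (le_trans (le_max_right _ _) (le_max_right _ _))
    have hbc : a + b + c = a + (b + c) := by ring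
    rw [hbc]
    have key := choose3_add a (b + c)
    have h2 : a ≤ a.choose 2 := by
      rw [Nat.choose_two_right]
      have h' : 2 * a ≤ a * (a - 1) := by
        have : a - 1 = n + 2 := by omega
        rw [this, ha]; nlinarith
      calc a = 2 * a / 2 := by omega
        _ ≤ a * (a - 1) / 2 := Nat.div_le_div_right h'
    have hab : a * b ≤ a.choose 2 * b := Nat.mul_le_mul_right b h2
    have hc : c ≤ a.choose 2 * c := by
      have h1 : 1 ≤ a.choose 2 := by omega
      calc c = 1 * c := by ring
        _ ≤ a.choose 2 * c := Nat.mul_le_mul_right c h1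
    have hd : a.choose 2 * (b + c) = a.choose 2 * b + a.choose 2 * c := by ring
    omega
end

section
/- For all natural numbers a, b, c and d with ℓ = a + b + c + d, we have d + c·a + C(b,2) + b·C(a,2) + C(a,4) ≤ max{C(ℓ,1), C(ℓ,2), C(ℓ,3), C(ℓ,4)}; that is, F(ℓ,4) ≤ G(ℓ,4). -/
set_option maxHeartbeats 1000000 in
private lemma aux_choose_two_cast (n : ℕ) : ((n.choose 2 : ℕ) : ℤ) * 2 = (n:ℤ) * ((n:ℤ) - 1) := by
  induction n with
  | zero => simp
  | succ n ih =>
    rw [Nat.choose_succ_succ]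
    push_cast [Nat.choose_one_right]
    push_cast at ih
    linear_combination ih

set_option maxHeartbeats 1000000 in
private lemma aux_choose_three_cast (n : ℕ) :
    ((n.choose 3 : ℕ) : ℤ) * 6 = (n:ℤ) * ((n:ℤ) - 1) * ((n:ℤ) - 2) := by
  induction n with
  | zero => simp
  | succ n ih =>
    rw [Nat.choose_succ_succ]
    push_cast
    push_cast at ih
    linear_combination ih + 3 * aux_choose_two_cast n

set_option maxHeartbeats 1000000 in
private lemma aux_choose_four_cast (n : ℕ) :
    ((n.choose 4 : ℕ) : ℤ) * 24 = (n:ℤ) * ((n:ℤ) - 1) * ((n:ℤ) - 2) * ((n:ℤ) - 3) := by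
  induction n with
  | zero => simp
  | succ n ih =>
    rw [Nat.choose_succ_succ]
    push_cast
    push_cast at ih
    linear_combination ih + 4 * aux_choose_three_cast n

set_option maxHeartbeats 2000000 in
private lemma aux_int_key (a b c d : ℤ) (ha : 0 ≤ a) (hb : 0 ≤ b) (hc : 0 ≤ c) (hd : 0 ≤ d)
    (h6 : 6 ≤ a + b + c + d) :
    24*d + 24*c*a + 12*b*(b-1) + 12*b*a*(a-1) + a*(a-1)*(a-2)*(a-3)
      ≤ (a+b+c+d)*(a+b+c+d-1)*(a+b+c+d-2)*(a+b+c+d-3) := by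
  rcases le_or_gt 3 a with ha3 | ha3
  · rcases le_or_gt 3 (b + c + d) with hs3 | hs3
    · -- main case : a ≥ 3, s ≥ 3
      nlinarith [mul_nonneg (by linarith : (0:ℤ) ≤ c+d) (by linarith : (0:ℤ) ≤ (b+c+d)+b-1),
        mul_nonneg hc (mul_nonneg ha (by linarith : (0:ℤ) ≤ a-3)),
        mul_nonneg hd (by nlinarith : (0:ℤ) ≤ a*(a-1)-2),
        mul_nonneg (mul_nonneg (mul_nonneg ha (by linarith : (0:ℤ) ≤ a-1)) (by linarith : (0:ℤ) ≤ a-2)) (by linarith : (0:ℤ) ≤ b+c+d),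
        mul_nonneg (mul_nonneg ha (by linarith : (0:ℤ) ≤ a-1)) (mul_nonneg (by linarith : (0:ℤ) ≤ b+c+d) (by linarith : (0:ℤ) ≤ (b+c+d)-3)),
        mul_nonneg (mul_nonneg (by linarith : (0:ℤ) ≤ b+c+d) (by linarith : (0:ℤ) ≤ (b+c+d)-1)) (by nlinarith : (0:ℤ) ≤ a*((b+c+d)-2)-3),
        mul_nonneg (mul_nonneg (mul_nonneg (by linarith : (0:ℤ) ≤ b+c+d) (by linarith : (0:ℤ) ≤ (b+c+d)-1)) (by linarith : (0:ℤ) ≤ (b+c+d)-2)) (by linarith : (0:ℤ) ≤ (b+c+d)-3)]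
    · -- a ≥ 4, s ≤ 2
      have ha4 : 4 ≤ a := by linarith
      have p0 : (0:ℤ) ≤ a := by linarith
      have p1 : (0:ℤ) ≤ a - 1 := by linarith
      have p2 : (0:ℤ) ≤ a - 2 := by linarith
      have hb2 : b ≤ 2 := by linarith
      have hc2 : c ≤ 2 := by linarith
      have hd2 : d ≤ 2 := by linarith
      interval_cases b <;> interval_cases c <;> interval_cases d <;>
      first
      | (have hX : (0:ℤ) ≤ a - 6 := by linarith
         nlinarith [hX, mul_nonneg p0 p1, mul_nonneg (mul_nonneg p0 p1) p2,
           mul_nonneg (mul_nonneg p0 p1) hX, mul_nonneg (mul_nonneg (mul_nonneg p0 p1) p2) hX,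
           mul_nonneg p0 hX, mul_nonneg p0 p2, mul_nonneg p1 p2])
      | (have hX : (0:ℤ) ≤ a - 5 := by linarith
         nlinarith [hX, mul_nonneg p0 p1, mul_nonneg (mul_nonneg p0 p1) p2,
           mul_nonneg (mul_nonneg p0 p1) hX, mul_nonneg (mul_nonneg (mul_nonneg p0 p1) p2) hX,
           mul_nonneg p0 hX, mul_nonneg p0 p2, mul_nonneg p1 p2])
      | (have hX : (0:ℤ) ≤ a - 4 := by linarith
         nlinarith [hX, mul_nonneg p0 p1, mul_nonneg (mul_nonneg p0 p1) p2,
           mul_nonneg (mul_nonneg p0 p1) hX, mul_nonneg (mul_nonneg (mul_nonneg p0 p1) p2) hX,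
           mul_nonneg p0 hX, mul_nonneg p0 p2, mul_nonneg p1 p2])
  · -- a ≤ 2
    have hs : 4 ≤ b + c + d := by linarith
    interval_cases a
    · -- a = 0
      nlinarith [mul_nonneg (mul_nonneg (by linarith : (0:ℤ) ≤ b+c+d) (by linarith : (0:ℤ) ≤ b+c+d-1)) (by nlinarith : (0:ℤ) ≤ (b+c+d-2)*(b+c+d-3) - 12),
        mul_nonneg hc (by linarith : (0:ℤ) ≤ (b+c+d)+b-1),
        mul_nonneg hd (by linarith : (0:ℤ) ≤ (b+c+d)+b-3)]
    · -- a = 1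
      have hs5 : 5 ≤ b + c + d := by linarith
      nlinarith [mul_nonneg (mul_nonneg (mul_nonneg (by linarith : (0:ℤ) ≤ b+c+d) (by linarith : (0:ℤ) ≤ b+c+d-5)) (by linarith : (0:ℤ) ≤ b+c+d+1)) (by linarith : (0:ℤ) ≤ b+c+d+2),
        mul_nonneg (by linarith : (0:ℤ) ≤ c+d) (by linarith : (0:ℤ) ≤ (b+c+d)+b-1), hb]
    · -- a = 2
      nlinarith [mul_nonneg hd (by linarith : (0:ℤ) ≤ (b+c+d)-1),
        mul_nonneg hc (by linarith : (0:ℤ) ≤ (b+c+d)-3),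
        mul_nonneg hb (by linarith : (0:ℤ) ≤ (b+c+d)-b),
        mul_nonneg (by linarith : (0:ℤ) ≤ b+c+d)
          (by nlinarith [mul_nonneg (by linarith : (0:ℤ) ≤ b+c+d-4) (by nlinarith : (0:ℤ) ≤ (b+c+d)*(b+c+d)+6*(b+c+d)+11)] :
            (0:ℤ) ≤ ((b+c+d)-1)*((b+c+d)-2)*((b+c+d)+5) - 24)]

set_option maxHeartbeats 4000000 in
/-- `F(ℓ,4) ≤ G(ℓ,4)`: for `ℓ = a + b + c + d`,
`d + c·a + C(b,2) + b·C(a,2) + C(a,4) ≤ max {C(ℓ,1), C(ℓ,2), C(ℓ,3), C(ℓ,4)}`. -/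
theorem multi_occurrence_le_single_four (a b c d ℓ : ℕ) (h : ℓ = a + b + c + d) :
    d + c * a + b.choose 2 + b * a.choose 2 + a.choose 4
      ≤ max (ℓ.choose 1) (max (ℓ.choose 2) (max (ℓ.choose 3) (ℓ.choose 4))) := by
  rcases le_or_gt ℓ 5 with hl | hl
  · -- small case : ℓ ≤ 5
    have ha : a ≤ 5 := by omega
    have hb : b ≤ 5 := by omega
    have hc : c ≤ 5 := by omega
    have hd : d ≤ 5 := by omega
    interval_cases a <;> interval_cases b <;> interval_cases c <;> interval_cases d <;>
      subst h <;> decide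
  · -- large case : ℓ ≥ 6, show LHS ≤ C(ℓ,4)
    have key : d + c * a + b.choose 2 + b * a.choose 2 + a.choose 4 ≤ ℓ.choose 4 := by
      rw [← @Nat.cast_le ℤ]
      push_cast
      have hna : (0:ℤ) ≤ (a:ℤ) := Int.ofNat_nonneg a
      have hnb : (0:ℤ) ≤ (b:ℤ) := Int.ofNat_nonneg b
      have hnc : (0:ℤ) ≤ (c:ℤ) := Int.ofNat_nonneg c
      have hnd : (0:ℤ) ≤ (d:ℤ) := Int.ofNat_nonneg d
      have h6 : (6:ℤ) ≤ (a:ℤ) + b + c + d := by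
        have : (6:ℕ) ≤ a + b + c + d := by omega
        exact_mod_cast this
      have k := aux_int_key (a:ℤ) b c d hna hnb hnc hnd h6
      have hcast : ((ℓ:ℕ):ℤ) = (a:ℤ) + b + c + d := by
        rw [h]; push_cast; ring
      have e2 := aux_choose_two_cast b
      have e3 := aux_choose_four_cast a
      have e4 := aux_choose_four_cast ℓ
      rw [hcast] at e4
      have e5 : ((b:ℤ) * ((a.choose 2 : ℕ) : ℤ)) * 2 = (b:ℤ) * ((a:ℤ) * ((a:ℤ) - 1)) := by
        linear_combination (b:ℤ) * aux_choose_two_cast a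
      linarith [k, e2, e3, e4, e5]
    calc d + c * a + b.choose 2 + b * a.choose 2 + a.choose 4 ≤ ℓ.choose 4 := key
      _ ≤ max (ℓ.choose 1) (max (ℓ.choose 2) (max (ℓ.choose 3) (ℓ.choose 4))) := by
        exact le_max_of_le_right (le_max_of_le_right (le_max_right _ _))
end
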